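/- Let k ≥ 4 and let a_{ij} (i+j = k, i,j ≥ 0) be real numbers. Consider the polynomial P(x,y) = x^3 + Σ_{i+j=k} (a_{ij}/(i!j!)) x^i y^j in ℝ[x,y], and set w(x,y) = (1/3) Σ_{i+j=k, i≥2} (a_{ij}/(i!j!)) x^{i-2} y^{j}. Then every monomial occurring in the polynomial P(x − w(x,y), y) − (x^3 + (a_{1,k-1}/(k-1)!) x y^{k-1} + (a_{0k}/k!) y^k) has total degree at least k+1; that is, the k-jet at the origin of P after the coordinate change (x,y) ↦ (x − w(x,y), y) equals x^3 + (a_{1,k-1}/(k-1)!) x y^{k-1} + (a_{0k}/k!) y^k. -/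

import Mathlib

open MvPolynomial

def lowOK (n : ℕ) (p : MvPolynomial (Fin 2) ℝ) : Prop :=
  ∀ m ∈ p.support, n ≤ m.sum fun _ e => e

lemma lowOK_zero (n : ℕ) : lowOK n (0 : MvPolynomial (Fin 2) ℝ) := by
  intro m hm; simp at hm

lemma lowOK_zero' (p : MvPolynomial (Fin 2) ℝ) : lowOK 0 p := fun _ _ => Nat.zero_le _

lemma lowOK_mono {m n : ℕ} {p : MvPolynomial (Fin 2) ℝ} (h : m ≤ n) (hp : lowOK n p) :
    lowOK m p := fun s hs => h.trans (hp s hs)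

lemma lowOK_add {n : ℕ} {p q : MvPolynomial (Fin 2) ℝ} (hp : lowOK n p) (hq : lowOK n q) :
    lowOK n (p + q) := by
  intro m hm
  rcases Finset.mem_union.1 (MvPolynomial.support_add hm) with h | h
  exacts [hp m h, hq m h]

lemma lowOK_neg {n : ℕ} {p : MvPolynomial (Fin 2) ℝ} (hp : lowOK n p) : lowOK n (-p) := by
  intro m hm
  exact hp m (by simpa using hm)

lemma lowOK_sub {n : ℕ} {p q : MvPolynomial (Fin 2) ℝ} (hp : lowOK n p) (hq : lowOK n q) :
    lowOK n (p - q) := by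
  rw [sub_eq_add_neg]; exact lowOK_add hp (lowOK_neg hq)

lemma lowOK_mul {m n : ℕ} {p q : MvPolynomial (Fin 2) ℝ} (hp : lowOK m p) (hq : lowOK n q) :
    lowOK (m + n) (p * q) := by
  intro s hs
  have := MvPolynomial.support_mul p q hs
  rw [Finset.mem_add] at this
  obtain ⟨u, hu, v, hv, rfl⟩ := this
  rw [Finsupp.sum_add_index' (fun _ => rfl) (fun _ _ _ => rfl)]
  exact Nat.add_le_add (hp u hu) (hq v hv)

lemma lowOK_X (j : Fin 2) : lowOK 1 (X j : MvPolynomial (Fin 2) ℝ) := by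
  intro m hm
  rw [MvPolynomial.support_X, Finset.mem_singleton] at hm
  subst hm; simp

lemma lowOK_pow {n : ℕ} {p : MvPolynomial (Fin 2) ℝ} (hp : lowOK n p) (e : ℕ) :
    lowOK (e * n) (p ^ e) := by
  induction e with
  | zero => simpa using lowOK_zero' 1
  | succ e ih =>
    rw [pow_succ, Nat.succ_mul]
    exact lowOK_mul ih hp

lemma lowOK_X_pow (j : Fin 2) (e : ℕ) : lowOK e ((X j : MvPolynomial (Fin 2) ℝ) ^ e) := by
  simpa using lowOK_pow (lowOK_X j) e

lemma lowOK_sum {n : ℕ} {s : Finset ℕ} {f : ℕ → MvPolynomial (Fin 2) ℝ}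
    (h : ∀ i ∈ s, lowOK n (f i)) : lowOK n (∑ i ∈ s, f i) := by
  classical
  induction s using Finset.induction with
  | empty => simpa using lowOK_zero n
  | insert _ _ hx ih =>
    rw [Finset.sum_insert hx]
    exact lowOK_add (h _ (Finset.mem_insert_self _ _))
      (ih fun i hi => h i (Finset.mem_insert_of_mem hi))

/-- The polynomial `P(x,y) = x³ + Σ_{i+j=k} (a_{ij}/(i!j!)) xⁱ yʲ`. -/
noncomputable def Pdef2 (k : ℕ) (a : ℕ → ℕ → ℝ) : MvPolynomial (Fin 2) ℝ :=
  X 0 ^ 3 + ∑ i ∈ Finset.range (k + 1),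
    C (a i (k - i) / ((Nat.factorial i : ℝ) * (Nat.factorial (k - i) : ℝ))) *
      X 0 ^ i * X 1 ^ (k - i)

/-- The polynomial `w(x,y) = (1/3) Σ_{i+j=k, i≥2} (a_{ij}/(i!j!)) x^{i-2} yʲ`. -/
noncomputable def wdef2 (k : ℕ) (a : ℕ → ℕ → ℝ) : MvPolynomial (Fin 2) ℝ :=
  C (1 / 3 : ℝ) * ∑ i ∈ Finset.Ico 2 (k + 1),
    C (a i (k - i) / ((Nat.factorial i : ℝ) * (Nat.factorial (k - i) : ℝ))) *
      X 0 ^ (i - 2) * X 1 ^ (k - i)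

/-- Part (3) of the coordinate-change lemma (Proposition 3.1):
every monomial of
`P(x - w(x,y), y) - (x³ + (a_{1,k-1}/(k-1)!) x y^{k-1} + (a_{0k}/k!) yᵏ)` has total degree
at least `k + 1`; that is, the `k`-jet at the origin of `P` after the coordinate change
`(x,y) ↦ (x - w(x,y), y)` equals `x³ + (a_{1,k-1}/(k-1)!) x y^{k-1} + (a_{0k}/k!) yᵏ`. -/
theorem stmt2 (k : ℕ) (hk : 4 ≤ k) (a : ℕ → ℕ → ℝ) :
    ∀ m ∈ (bind₁ (fun j : Fin 2 => if j = 0 then X 0 - wdef2 k a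
          else (X 1 : MvPolynomial (Fin 2) ℝ)) (Pdef2 k a)
        - (X 0 ^ 3 + C (a 1 (k - 1) / (Nat.factorial (k - 1) : ℝ)) * X 0 * X 1 ^ (k - 1)
            + C (a 0 k / (Nat.factorial k : ℝ)) * X 1 ^ k)).support,
      k + 1 ≤ m.sum fun _ e => e := by
  set c : ℕ → ℝ := fun i => a i (k - i) / ((Nat.factorial i : ℝ) * (Nat.factorial (k - i) : ℝ))
    with hc
  have hb : bind₁ (fun j : Fin 2 => if j = 0 then X 0 - wdef2 k a
          else (X 1 : MvPolynomial (Fin 2) ℝ)) (Pdef2 k a)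
      = (X 0 - wdef2 k a) ^ 3 + ∑ i ∈ Finset.range (k + 1),
          C (c i) * (X 0 - wdef2 k a) ^ i * X 1 ^ (k - i) := by
    simp [Pdef2, map_add, map_sum, map_mul, map_pow, bind₁_X_right, algHom_C, hc]
  have h3 : (3 : MvPolynomial (Fin 2) ℝ) * C (1 / 3 : ℝ) = 1 := by
    rw [show (3 : MvPolynomial (Fin 2) ℝ) = C (3 : ℝ) from (map_ofNat C 3).symm, ← C_mul]
    norm_num
  have hkey : 3 * X 0 ^ 2 * wdef2 k a = ∑ i ∈ Finset.Ico 2 (k + 1),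
      C (c i) * X 0 ^ i * X 1 ^ (k - i) := by
    rw [wdef2, ← mul_assoc, mul_comm (3 * X 0 ^ 2 : MvPolynomial (Fin 2) ℝ) (C (1/3 : ℝ)),
      mul_assoc, Finset.mul_sum, Finset.mul_sum]
    refine Finset.sum_congr rfl fun i hi => ?_
    obtain ⟨h2, hik⟩ := Finset.mem_Ico.mp hi
    have hpow : (X 0 : MvPolynomial (Fin 2) ℝ) ^ 2 * X 0 ^ (i - 2) = X 0 ^ i := by
      rw [← pow_add]; congr 1; omega
    calc (C (1/3:ℝ) : MvPolynomial (Fin 2) ℝ) * (3 * X 0 ^ 2 * (C (c i) * X 0 ^ (i-2) * X 1 ^ (k-i)))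
        = (3 * C (1/3:ℝ) : MvPolynomial (Fin 2) ℝ) * (C (c i) * (X 0 ^ 2 * X 0 ^ (i-2)) * X 1 ^ (k-i)) := by ring
      _ = C (c i) * X 0 ^ i * X 1 ^ (k-i) := by rw [h3, hpow, one_mul]
  have hwlow : lowOK (k - 2) (wdef2 k a) := by
    rw [wdef2]
    have hs : lowOK (k - 2) (∑ i ∈ Finset.Ico 2 (k + 1),
        C (a i (k - i) / ((Nat.factorial i : ℝ) * (Nat.factorial (k - i) : ℝ))) *
          X 0 ^ (i - 2) * X 1 ^ (k - i)) := by
      refine lowOK_sum fun i hi => ?_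
      obtain ⟨h2, hik⟩ := Finset.mem_Ico.mp hi
      refine lowOK_mono (show k - 2 ≤ 0 + (i - 2) + (k - i) by omega) ?_
      exact lowOK_mul (lowOK_mul (lowOK_zero' _) (lowOK_X_pow 0 (i-2))) (lowOK_X_pow 1 (k-i))
    simpa using lowOK_mul (lowOK_zero' (C (1/3 : ℝ))) hs
  have hE : ∀ i : ℕ, lowOK (k - 3 + i) ((X 0 - wdef2 k a) ^ i - X 0 ^ i) := by
    intro i
    induction i with
    | zero => simpa using lowOK_zero (k - 3 + 0)
    | succ i ih =>
      have hid : (X 0 - wdef2 k a) ^ (i+1) - X 0 ^ (i+1)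
          = (X 0 - wdef2 k a) * ((X 0 - wdef2 k a) ^ i - X 0 ^ i)
            + (-(wdef2 k a)) * X 0 ^ i := by ring
      rw [hid]
      refine lowOK_add ?_ ?_
      · have h1 : lowOK 1 (X 0 - wdef2 k a) :=
          lowOK_sub (lowOK_X 0) (lowOK_mono (by omega) hwlow)
        exact lowOK_mono (by omega) (lowOK_mul h1 ih)
      · exact lowOK_mono (by omega) (lowOK_mul (lowOK_neg hwlow) (lowOK_X_pow 0 i))
  have hsplit : ∑ i ∈ Finset.range (k+1), C (c i) * X 0 ^ i * X 1 ^ (k - i)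
      = C (c 0) * X 1 ^ k + C (c 1) * X 0 * X 1 ^ (k-1) + 3 * X 0 ^ 2 * wdef2 k a := by
    rw [hkey, Finset.range_eq_Ico,
      Finset.sum_eq_sum_Ico_succ_bot (by omega : 0 < k+1),
      Finset.sum_eq_sum_Ico_succ_bot (by omega : 1 < k+1)]
    simp only [pow_zero, pow_one, Nat.sub_zero, mul_one]
    ring
  have hsum : ∑ i ∈ Finset.range (k+1), C (c i) * (X 0 - wdef2 k a) ^ i * X 1 ^ (k-i)
      = (∑ i ∈ Finset.range (k+1), C (c i) * ((X 0 - wdef2 k a) ^ i - X 0 ^ i) * X 1 ^ (k-i))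
        + ∑ i ∈ Finset.range (k+1), C (c i) * X 0 ^ i * X 1 ^ (k-i) := by
    rw [← Finset.sum_add_distrib]
    exact Finset.sum_congr rfl fun i _ => by ring
  have e1 : a 1 (k-1) / (Nat.factorial (k-1) : ℝ) = c 1 := by
    simp [hc, Nat.factorial_one]
  have e0 : a 0 k / (Nat.factorial k : ℝ) = c 0 := by
    simp [hc]
  have hD : bind₁ (fun j : Fin 2 => if j = 0 then X 0 - wdef2 k a
          else (X 1 : MvPolynomial (Fin 2) ℝ)) (Pdef2 k a)
      - (X 0 ^ 3 + C (a 1 (k - 1) / (Nat.factorial (k - 1) : ℝ)) * X 0 * X 1 ^ (k - 1)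
          + C (a 0 k / (Nat.factorial k : ℝ)) * X 1 ^ k)
      = 3 * X 0 * (wdef2 k a) ^ 2 - (wdef2 k a) ^ 3
        + ∑ i ∈ Finset.range (k+1),
            C (c i) * ((X 0 - wdef2 k a) ^ i - X 0 ^ i) * X 1 ^ (k - i) := by
    rw [hb, hsum, hsplit, e1, e0]; ring
  rw [hD]
  refine lowOK_add (lowOK_sub ?_ ?_) ?_
  · exact lowOK_mono (by omega)
      (lowOK_mul (lowOK_mul (lowOK_zero' 3) (lowOK_X 0)) (lowOK_pow hwlow 2))
  · exact lowOK_mono (by omega) (lowOK_pow hwlow 3)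
  · refine lowOK_sum fun i hi => ?_
    have hik : i < k + 1 := Finset.mem_range.mp hi
    exact lowOK_mono (by omega)
      (lowOK_mul (lowOK_mul (lowOK_zero' _) (hE i)) (lowOK_X_pow 1 (k-i)))
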